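/- arXiv:2505.13662 — 2 statements merged into one kernel-verified Lean document; each statement's English description precedes it below -/
import Mathlib

section
/- Let m ≥ 1, h ≥ 1, n ≥ 2 be integers, let X be a dataset of n real numbers with sorted order x_(1) ≤ … ≤ x_(n), let X′ be obtained from X by removing the element at sorted position s, and define G⁻ : ℤ^m → ℤ^m by G⁻(r̃)_1 = r̃_1 and, for 2 ≤ i ≤ m, G⁻(r̃)_i = r̃_i − 1 if r̃_{i−1} − h > s and G⁻(r̃)_i = r̃_i otherwise. Then for every r̃ ∈ Good_{m,n−1,h+1}, setting S_i = { x_(r̃_i−h), …, x_(r̃_i+h) } and S′_i = { x′_(G⁻(r̃)_i−h), …, x′_(G⁻(r̃)_i+h) }: d_sub(S_i, S′_i) ≤ 1 for every i, there are at most two indices i with S_i ≠ S′_i, and Σ_{i=1}^m d_sub(S_i, S′_i) ≤ 2. -/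
/-- `Good m n h` is the set of vectors `(r_1, …, r_m) ∈ ℤ^m` (zero-indexed as
`Fin m → ℤ`) with `h ≤ r_1`, `r_{i-1} + 2h ≤ r_i` for `2 ≤ i ≤ m` and `r_m ≤ n - h`. -/
def Good (m : ℕ) (n h : ℤ) : Set (Fin m → ℤ) :=
  { r | (∀ i : Fin m, (i : ℕ) = 0 → h ≤ r i) ∧
        (∀ i j : Fin m, (i : ℕ) + 1 = (j : ℕ) → r i + 2 * h ≤ r j) ∧
        (∀ i : Fin m, (i : ℕ) = m - 1 → r i ≤ n - h) }

/-- `dsub S S'` is the number of single-element substitutions needed to transform the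
multiset `S` into the multiset `S'` (of the same size): `|S| - |S ∩ S'|`. -/
noncomputable def dsub (S S' : Multiset ℝ) : ℕ := S.card - (S ∩ S').card

lemma dsub_self' (S : Multiset ℝ) : dsub S S = 0 := by
  have h : S ∩ S = S := le_antisymm Multiset.inter_le_left (Multiset.le_inter le_rfl le_rfl)
  simp [dsub, h]

lemma dsub_le_of_le (S S' C : Multiset ℝ) (h1 : C ≤ S) (h2 : C ≤ S') :
    dsub S S' ≤ Multiset.card S - Multiset.card C := by
  have hle : C ≤ S ∩ S' := Multiset.le_inter h1 h2
  have hc := Multiset.card_le_card hle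
  unfold dsub
  omega

lemma shift_map (x : ℤ → ℝ) (a b : ℤ) :
    (Finset.Icc a b).val.map (fun j => x (j + 1)) = (Finset.Icc (a + 1) (b + 1)).val.map x := by
  have he : Finset.Icc (a + 1) (b + 1)
      = (Finset.Icc a b).map ⟨fun j => j + 1, add_left_injective 1⟩ := by
    ext j
    simp only [Finset.mem_Icc, Finset.mem_map, Function.Embedding.coeFn_mk]
    constructor
    · intro hj; exact ⟨j - 1, by omega, by ring⟩
    · rintro ⟨k, hk, rfl⟩; omega
  rw [he, Finset.map_val, Multiset.map_map]
  rfl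

lemma icc_split (a s b : ℤ) (h1 : a ≤ s) (h2 : s ≤ b) :
    (Finset.Icc a b).val = (Finset.Icc a (s - 1)).val + (Finset.Icc s b).val := by
  have hd : Disjoint (Finset.Icc a (s - 1)) (Finset.Icc s b) := by
    rw [Finset.disjoint_left]
    intro j hj hj'
    rw [Finset.mem_Icc] at hj hj'
    omega
  have he : Finset.Icc a b = (Finset.Icc a (s - 1)).disjUnion (Finset.Icc s b) hd := by
    ext j
    simp only [Finset.mem_Icc, Finset.mem_disjUnion]
    omega
  rw [he]
  rfl

theorem stmt_6 (m : ℕ) (hm : 1 ≤ m) (n h s : ℤ) (hn : 2 ≤ n) (hh : 1 ≤ h)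
    (hs : s ∈ Set.Icc 1 n)
    (x x' : ℤ → ℝ) (hmono : MonotoneOn x (Set.Icc 1 n))
    (hx' : ∀ i : ℤ, x' i = if i < s then x i else x (i + 1))
    (Gm : (Fin m → ℤ) → (Fin m → ℤ))
    (hGm₀ : ∀ r : Fin m → ℤ, ∀ i : Fin m, (i : ℕ) = 0 → Gm r i = r i)
    (hGm₁ : ∀ r : Fin m → ℤ, ∀ i j : Fin m, (j : ℕ) + 1 = (i : ℕ) →
      Gm r i = if s < r j - h then r i - 1 else r i) :
    ∀ rt ∈ Good m (n - 1) (h + 1),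
      (∀ i : Fin m,
        dsub ((Finset.Icc (rt i - h) (rt i + h)).val.map x)
             ((Finset.Icc (Gm rt i - h) (Gm rt i + h)).val.map x') ≤ 1) ∧
      ((Finset.univ.filter (fun i : Fin m =>
          ((Finset.Icc (rt i - h) (rt i + h)).val.map x)
            ≠ ((Finset.Icc (Gm rt i - h) (Gm rt i + h)).val.map x'))).card ≤ 2) ∧
      (∑ i : Fin m,
        dsub ((Finset.Icc (rt i - h) (rt i + h)).val.map x)
             ((Finset.Icc (Gm rt i - h) (Gm rt i + h)).val.map x')) ≤ 2 := by
  intro rt hrt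
  obtain ⟨hg1, hg2, hg3⟩ := hrt
  -- monotonicity of rt with gaps
  have mono0 : ∀ d : ℕ, ∀ p q : Fin m, (q : ℕ) = (p : ℕ) + d + 1 →
      rt p + 2 * (h + 1) ≤ rt q := by
    intro d
    induction d with
    | zero => intro p q hpq; exact hg2 p q (by omega)
    | succ d ih =>
      intro p q hpq
      have hq1 : (q : ℕ) - 1 < m := by have := q.isLt; omega
      have h1 := ih p ⟨(q : ℕ) - 1, hq1⟩ (by simp; omega)
      have h2 := hg2 ⟨(q : ℕ) - 1, hq1⟩ q (by simp; omega)
      linarith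
  have mono : ∀ p q : Fin m, (p : ℕ) < (q : ℕ) → rt p + 2 * (h + 1) ≤ rt q :=
    fun p q hpq => mono0 ((q : ℕ) - (p : ℕ) - 1) p q (by omega)
  -- key per-index analysis
  have key : ∀ i : Fin m,
      ((Finset.Icc (rt i - h) (rt i + h)).val.map x
        = (Finset.Icc (Gm rt i - h) (Gm rt i + h)).val.map x')
      ∨ (dsub ((Finset.Icc (rt i - h) (rt i + h)).val.map x)
          ((Finset.Icc (Gm rt i - h) (Gm rt i + h)).val.map x') ≤ 1
         ∧ (∀ j : Fin m, (j : ℕ) + 1 = (i : ℕ) → rt j - h ≤ s) ∧ s ≤ rt i + h) := by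
    intro i
    by_cases hA : ∃ j : Fin m, (j : ℕ) + 1 = (i : ℕ) ∧ s < rt j - h
    · left
      obtain ⟨j, hj, hjs⟩ := hA
      have hGi : Gm rt i = rt i - 1 := by rw [hGm₁ rt i j hj, if_pos hjs]
      have hstep := hg2 j i hj
      rw [hGi]
      have hcg : ∀ k ∈ (Finset.Icc (rt i - 1 - h) (rt i - 1 + h)).val,
          x' k = x (k + 1) := by
        intro k hk
        rw [Finset.mem_val, Finset.mem_Icc] at hk
        rw [hx' k, if_neg (by omega)]
      rw [Multiset.map_congr rfl hcg, shift_map]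
      have e1 : rt i - 1 - h + 1 = rt i - h := by ring
      have e2 : rt i - 1 + h + 1 = rt i + h := by ring
      rw [e1, e2]
    · have hcond : ∀ j : Fin m, (j : ℕ) + 1 = (i : ℕ) → rt j - h ≤ s := by
        intro j hj
        by_contra hc
        exact hA ⟨j, hj, by omega⟩
      have hGi : Gm rt i = rt i := by
        rcases Nat.eq_zero_or_pos (i : ℕ) with h0 | hpos
        · exact hGm₀ rt i h0
        · have hj1 : (i : ℕ) - 1 < m := by have := i.isLt; omega
          rw [hGm₁ rt i ⟨(i : ℕ) - 1, hj1⟩ (by simp; omega),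
            if_neg (not_lt.mpr (hcond _ (by simp; omega)))]
      rw [hGi]
      by_cases hB : rt i + h < s
      · left
        refine Multiset.map_congr rfl ?_
        intro k hk
        rw [Finset.mem_val, Finset.mem_Icc] at hk
        rw [hx' k, if_pos (by omega)]
      · right
        push_neg at hB
        refine ⟨?_, hcond, hB⟩
        set a := rt i - h with ha
        set b := rt i + h with hb
        by_cases hsa : a ≤ s
        · have hsplit := icc_split a s b hsa hB
          have hA' : (Finset.Icc a (s - 1)).val.map x'
              = (Finset.Icc a (s - 1)).val.map x := by
            refine Multiset.map_congr rfl ?_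
            intro k hk
            rw [Finset.mem_val, Finset.mem_Icc] at hk
            rw [hx' k, if_pos (by omega)]
          have hB' : (Finset.Icc s b).val.map x'
              = (Finset.Icc (s + 1) (b + 1)).val.map x := by
            have hc : ∀ k ∈ (Finset.Icc s b).val, x' k = x (k + 1) := by
              intro k hk
              rw [Finset.mem_val, Finset.mem_Icc] at hk
              rw [hx' k, if_neg (by omega)]
            rw [Multiset.map_congr rfl hc, shift_map]
          have hC1 : (Finset.Icc a (s - 1)).val.map x + (Finset.Icc (s + 1) b).val.map x
              ≤ (Finset.Icc a b).val.map x := by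
            rw [hsplit, Multiset.map_add]
            exact add_le_add le_rfl (Multiset.map_le_map
              (Finset.val_le_iff.mpr (Finset.Icc_subset_Icc (by omega) le_rfl)))
          have hC2 : (Finset.Icc a (s - 1)).val.map x + (Finset.Icc (s + 1) b).val.map x
              ≤ (Finset.Icc a b).val.map x' := by
            rw [hsplit, Multiset.map_add, hA', hB']
            exact add_le_add le_rfl (Multiset.map_le_map
              (Finset.val_le_iff.mpr (Finset.Icc_subset_Icc le_rfl (by omega))))
          have hd := dsub_le_of_le _ _ _ hC1 hC2
          have c1 : Multiset.card ((Finset.Icc a b).val.map x) = (b + 1 - a).toNat := by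
            rw [Multiset.card_map]
            exact Int.card_Icc a b
          have c2 : Multiset.card ((Finset.Icc a (s - 1)).val.map x
              + (Finset.Icc (s + 1) b).val.map x)
              = (s - 1 + 1 - a).toNat + (b + 1 - (s + 1)).toNat := by
            rw [Multiset.card_add, Multiset.card_map, Multiset.card_map]
            rw [show ((Finset.Icc a (s-1)).val.card = (Finset.Icc a (s-1)).card) from rfl,
              show ((Finset.Icc (s+1) b).val.card = (Finset.Icc (s+1) b).card) from rfl,
              Int.card_Icc, Int.card_Icc]
          rw [c1, c2] at hd
          omega
        · push_neg at hsa
          have hall : (Finset.Icc a b).val.map x'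
              = (Finset.Icc (a + 1) (b + 1)).val.map x := by
            have hc : ∀ k ∈ (Finset.Icc a b).val, x' k = x (k + 1) := by
              intro k hk
              rw [Finset.mem_val, Finset.mem_Icc] at hk
              rw [hx' k, if_neg (by omega)]
            rw [Multiset.map_congr rfl hc, shift_map]
          have hC1 : (Finset.Icc (a + 1) b).val.map x ≤ (Finset.Icc a b).val.map x :=
            Multiset.map_le_map (Finset.val_le_iff.mpr
              (Finset.Icc_subset_Icc (by omega) le_rfl))
          have hC2 : (Finset.Icc (a + 1) b).val.map x ≤ (Finset.Icc a b).val.map x' := by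
            rw [hall]
            exact Multiset.map_le_map (Finset.val_le_iff.mpr
              (Finset.Icc_subset_Icc le_rfl (by omega)))
          have hd := dsub_le_of_le _ _ _ hC1 hC2
          have c1 : Multiset.card ((Finset.Icc a b).val.map x) = (b + 1 - a).toNat := by
            rw [Multiset.card_map]; exact Int.card_Icc a b
          have c2 : Multiset.card ((Finset.Icc (a + 1) b).val.map x)
              = (b + 1 - (a + 1)).toNat := by
            rw [Multiset.card_map]; exact Int.card_Icc (a + 1) b
          rw [c1, c2] at hd
          omega
  have cardF : (Finset.univ.filter (fun i : Fin m =>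
      ((Finset.Icc (rt i - h) (rt i + h)).val.map x)
        ≠ ((Finset.Icc (Gm rt i - h) (Gm rt i + h)).val.map x'))).card ≤ 2 := by
    set F := Finset.univ.filter (fun i : Fin m =>
      ((Finset.Icc (rt i - h) (rt i + h)).val.map x)
        ≠ ((Finset.Icc (Gm rt i - h) (Gm rt i + h)).val.map x')) with hF
    have hmem : ∀ i ∈ F, (∀ j : Fin m, (j : ℕ) + 1 = (i : ℕ) → rt j - h ≤ s)
        ∧ s ≤ rt i + h := by
      intro i hi
      rw [hF, Finset.mem_filter] at hi
      rcases key i with he | ⟨_, h2, h3⟩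
      · exact absurd he hi.2
      · exact ⟨h2, h3⟩
    have K : ∀ i ∈ F, ∀ j ∈ F, (i : ℕ) < (j : ℕ) → (j : ℕ) = (i : ℕ) + 1 := by
      intro i hi j hj hij
      by_contra hne
      have hj1 : (j : ℕ) - 1 < m := by have := j.isLt; omega
      have h1 : rt ⟨(j : ℕ) - 1, hj1⟩ - h ≤ s :=
        (hmem j hj).1 ⟨(j : ℕ) - 1, hj1⟩ (by simp; omega)
      have h2 : s ≤ rt i + h := (hmem i hi).2
      have h3 : rt i + 2 * (h + 1) ≤ rt ⟨(j : ℕ) - 1, hj1⟩ := mono i _ (by simp; omega)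
      linarith
    by_contra hcard
    push_neg at hcard
    obtain ⟨a, b, c, ha, hb, hc, hab, hac, hbc⟩ := Finset.two_lt_card_iff.mp hcard
    have p1 : (b : ℕ) = (a : ℕ) + 1 ∨ (a : ℕ) = (b : ℕ) + 1 := by
      rcases lt_trichotomy (a : ℕ) (b : ℕ) with hlt | heq | hgt
      · exact Or.inl (K a ha b hb hlt)
      · exact absurd (Fin.ext heq) hab
      · exact Or.inr (K b hb a ha hgt)
    have p2 : (c : ℕ) = (a : ℕ) + 1 ∨ (a : ℕ) = (c : ℕ) + 1 := by
      rcases lt_trichotomy (a : ℕ) (c : ℕ) with hlt | heq | hgt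
      · exact Or.inl (K a ha c hc hlt)
      · exact absurd (Fin.ext heq) hac
      · exact Or.inr (K c hc a ha hgt)
    have p3 : (c : ℕ) = (b : ℕ) + 1 ∨ (b : ℕ) = (c : ℕ) + 1 := by
      rcases lt_trichotomy (b : ℕ) (c : ℕ) with hlt | heq | hgt
      · exact Or.inl (K b hb c hc hlt)
      · exact absurd (Fin.ext heq) hbc
      · exact Or.inr (K c hc b hb hgt)
    omega
  refine ⟨?_, cardF, ?_⟩
  · intro i
    rcases key i with he | ⟨hle, _⟩
    · rw [he, dsub_self']; omega
    · exact hle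
  · classical
    set f : Fin m → ℕ := fun i =>
      dsub ((Finset.Icc (rt i - h) (rt i + h)).val.map x)
           ((Finset.Icc (Gm rt i - h) (Gm rt i + h)).val.map x') with hf
    set P : Fin m → Prop := fun i =>
      ((Finset.Icc (rt i - h) (rt i + h)).val.map x)
        ≠ ((Finset.Icc (Gm rt i - h) (Gm rt i + h)).val.map x') with hP
    have hsplit := Finset.sum_filter_add_sum_filter_not Finset.univ P f
    have hzero : ∑ i ∈ Finset.univ.filter (fun i => ¬ P i), f i = 0 := by
      refine Finset.sum_eq_zero ?_
      intro i hi
      rw [Finset.mem_filter] at hi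
      have he := not_not.mp hi.2
      rw [hf]
      simp only
      rw [he, dsub_self']
    have hone : ∑ i ∈ Finset.univ.filter P, f i
        ≤ (Finset.univ.filter P).card • 1 := by
      refine Finset.sum_le_card_nsmul _ _ _ ?_
      intro i hi
      rw [Finset.mem_filter] at hi
      rcases key i with he | ⟨hle, _⟩
      · exact absurd he hi.2
      · exact hle
    have hcard2 : (Finset.univ.filter P).card ≤ 2 := cardF
    calc (∑ i : Fin m, f i)
        = ∑ i ∈ Finset.univ.filter P, f i
          + ∑ i ∈ Finset.univ.filter (fun i => ¬ P i), f i := hsplit.symm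
      _ ≤ 2 := by
          rw [hzero]
          have := hone
          simp only [smul_eq_mul, mul_one] at this
          omega
end

section
/- Let m ≥ 1 and T ≥ 1 be integers, ε > 0, and β ∈ (0,1). On a common probability space, let (η_j)_{j∈J} be a finite family of independent real random variables, each having the Laplace distribution with scale T/ε, and for each i ∈ {1,…,m} let N_i = Σ_{j ∈ J_i} η_j for some subset J_i ⊆ J with |J_i| ≤ T (the N_i need not be independent of each other). Then Pr[ max_{1≤i≤m} |N_i| > (T/ε)·√(8·ln(2m/β))·(√T + √(ln(2m/β))) ] ≤ β. -/
open MeasureTheory ProbabilityTheory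

/-- The Laplace distribution on `ℝ` with scale `b`: the measure with density
`x ↦ (1/(2b)) · exp (-|x|/b)` with respect to Lebesgue measure. -/
noncomputable def laplaceMeasure (b : ℝ) : Measure ℝ :=
  (volume : Measure ℝ).withDensity
    (fun x => ENNReal.ofReal ((1 / (2 * b)) * Real.exp (-|x| / b)))

open Real Set

lemma exp_mul_integrableOn_Iic {c : ℝ} (hc : 0 < c) (a : ℝ) :
    IntegrableOn (fun x : ℝ => exp (c * x)) (Iic a) := by
  have h1 : IntegrableOn (fun x : ℝ => exp (-c * x)) (Ici (-a)) :=
    (integrableOn_Ici_iff_integrableOn_Ioi).2 (exp_neg_integrableOn_Ioi (-a) hc)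
  have h2 := (integrable_comp_mul_left_iff
      ((Ici (-a)).indicator (fun x : ℝ => exp (-c * x))) (by norm_num : (-1 : ℝ) ≠ 0)).2
      ((integrable_indicator_iff measurableSet_Ici).2 h1)
  rw [← integrable_indicator_iff (measurableSet_Iic : MeasurableSet (Iic a))]
  convert h2 using 1
  · rfl
  · rfl
  ext x
  by_cases hx : x ≤ a
  · rw [indicator_of_mem (by simpa using hx), indicator_of_mem (by simp; linarith)]
    ring_nf
  · rw [indicator_of_notMem (by simpa using hx), indicator_of_notMem (by simp; linarith)]

section laplace
variable {b l : ℝ}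

lemma laplace_dens_eq_Ioi (x : ℝ) (hx : x ∈ Ioi (0:ℝ)) :
    (1 / (2 * b)) * exp (-|x| / b) * exp (l * x)
      = (1 / (2 * b)) * exp (-(1/b - l) * x) := by
  rw [abs_of_pos hx, mul_assoc, ← exp_add]
  ring_nf

lemma laplace_dens_eq_Iic (x : ℝ) (hx : x ∈ Iic (0:ℝ)) :
    (1 / (2 * b)) * exp (-|x| / b) * exp (l * x)
      = (1 / (2 * b)) * exp ((1/b + l) * x) := by
  rw [abs_of_nonpos hx, mul_assoc, ← exp_add]
  ring_nf

lemma hpos1 (hl : |l| < 1 / b) : 0 < 1/b - l := by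
  have := abs_lt.1 hl; linarith [this.2]

lemma hpos2 (hl : |l| < 1 / b) : 0 < 1/b + l := by
  have := abs_lt.1 hl; linarith [this.1]

lemma laplace_integrable_dens (hl : |l| < 1 / b) :
    Integrable (fun x : ℝ => (1 / (2 * b)) * exp (-|x| / b) * exp (l * x)) := by
  have hIoi : IntegrableOn (fun x : ℝ => (1 / (2 * b)) * exp (-|x| / b) * exp (l * x)) (Ioi 0) :=
    IntegrableOn.congr_fun ((exp_neg_integrableOn_Ioi 0 (hpos1 hl)).const_mul (1/(2*b)))
      (fun x hx => (laplace_dens_eq_Ioi x hx).symm) measurableSet_Ioi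
  have hIic : IntegrableOn (fun x : ℝ => (1 / (2 * b)) * exp (-|x| / b) * exp (l * x)) (Iic 0) :=
    IntegrableOn.congr_fun ((exp_mul_integrableOn_Iic (hpos2 hl) 0).const_mul (1/(2*b)))
      (fun x hx => (laplace_dens_eq_Iic x hx).symm) measurableSet_Iic
  have := hIic.union hIoi
  rwa [Iic_union_Ioi, integrableOn_univ] at this

lemma laplace_meas_dens : Measurable (fun x : ℝ => ((1 / (2 * b)) * exp (-|x| / b)).toNNReal) := by
  fun_prop

lemma laplace_withDensity :
    laplaceMeasure b = (volume : Measure ℝ).withDensity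
      (fun x => (((1 / (2 * b)) * exp (-|x| / b)).toNNReal : ENNReal)) := rfl

lemma laplace_dens_nonneg (hb : 0 < b) (x : ℝ) : 0 ≤ (1 / (2 * b)) * exp (-|x| / b) := by
  positivity

lemma laplace_exp_integrable (hb : 0 < b) (hl : |l| < 1 / b) :
    Integrable (fun x : ℝ => exp (l * x)) (laplaceMeasure b) := by
  rw [laplace_withDensity,
    integrable_withDensity_iff_integrable_smul laplace_meas_dens]
  have : ∀ x : ℝ, ((1 / (2 * b)) * exp (-|x| / b)).toNNReal • exp (l * x)
      = (1 / (2 * b)) * exp (-|x| / b) * exp (l * x) := by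
    intro x
    rw [NNReal.smul_def, Real.coe_toNNReal _ (laplace_dens_nonneg hb x), smul_eq_mul]
  simpa only [this] using laplace_integrable_dens hl

lemma integral_exp_neg_mul_Ioi {c : ℝ} (hc : 0 < c) :
    ∫ x in Ioi (0:ℝ), exp (-(c * x)) = c⁻¹ := by
  have := integral_comp_mul_left_Ioi (fun x => exp (-x)) 0 hc
  simp only [mul_zero] at this
  rw [this, integral_exp_neg_Ioi, neg_zero, exp_zero, smul_eq_mul, mul_one]

lemma laplace_exp_integral (hb : 0 < b) (hl : |l| < 1 / b) :
    ∫ x, exp (l * x) ∂(laplaceMeasure b) = (1 - l^2 * b^2)⁻¹ := by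
  rw [laplace_withDensity, integral_withDensity_eq_integral_smul laplace_meas_dens]
  have heq : ∀ x : ℝ, ((1 / (2 * b)) * exp (-|x| / b)).toNNReal • exp (l * x)
      = (1 / (2 * b)) * exp (-|x| / b) * exp (l * x) := by
    intro x
    rw [NNReal.smul_def, Real.coe_toNNReal _ (laplace_dens_nonneg hb x), smul_eq_mul]
  simp only [heq]
  have hIoi : IntegrableOn (fun x : ℝ => (1 / (2 * b)) * exp (-|x| / b) * exp (l * x)) (Ioi 0) :=
    (laplace_integrable_dens hl).integrableOn
  have hIic : IntegrableOn (fun x : ℝ => (1 / (2 * b)) * exp (-|x| / b) * exp (l * x)) (Iic 0) :=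
    (laplace_integrable_dens hl).integrableOn
  rw [← intervalIntegral.integral_Iic_add_Ioi hIic hIoi]
  have e1 : ∫ x in Ioi (0:ℝ), (1 / (2 * b)) * exp (-|x| / b) * exp (l * x)
      = (1/(2*b)) * (1/b - l)⁻¹ := by
    rw [setIntegral_congr_fun measurableSet_Ioi (fun x hx => laplace_dens_eq_Ioi x hx),
      integral_const_mul]
    congr 1
    have := integral_exp_neg_mul_Ioi (hpos1 hl)
    rw [← this]
    congr 1 with x; ring_nf
  have e2 : ∫ x in Iic (0:ℝ), (1 / (2 * b)) * exp (-|x| / b) * exp (l * x)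
      = (1/(2*b)) * (1/b + l)⁻¹ := by
    rw [setIntegral_congr_fun measurableSet_Iic (fun x hx => laplace_dens_eq_Iic x hx)]
    have := integral_comp_neg_Ioi (c := 0) (fun x => (1/(2*b)) * exp ((1/b + l) * x))
    rw [neg_zero] at this
    rw [← this, integral_const_mul]
    congr 1
    have := integral_exp_neg_mul_Ioi (hpos2 hl)
    rw [← this]
    congr 1 with x; ring_nf
  rw [e1, e2]
  have habs := abs_lt.1 hl
  have hp1 : 0 < 1 - l * b := by
    have h := mul_lt_mul_of_pos_right habs.2 hb
    rw [one_div, inv_mul_cancel₀ hb.ne'] at h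
    linarith
  have hp2 : 0 < 1 + l * b := by
    have h := mul_lt_mul_of_pos_right habs.1 hb
    rw [neg_mul, one_div, inv_mul_cancel₀ hb.ne'] at h
    linarith
  have r1 : (1/b - l)⁻¹ = b * (1 - l*b)⁻¹ := by
    rw [show 1/b - l = (1 - l*b)/b by rw [eq_div_iff hb.ne']; field_simp, inv_div, div_eq_mul_inv]
  have r2 : (1/b + l)⁻¹ = b * (1 + l*b)⁻¹ := by
    rw [show 1/b + l = (1 + l*b)/b by rw [eq_div_iff hb.ne']; field_simp, inv_div, div_eq_mul_inv]
  have hfact : 1 - l^2*b^2 = (1 - l*b) * (1 + l*b) := by ring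
  rw [r1, r2, hfact, mul_inv]
  have hp1' : 1 - b * l ≠ 0 := by rw [mul_comm]; exact hp1.ne'
  have hp2' : 1 + b * l ≠ 0 := by rw [mul_comm]; exact hp2.ne'
  have hp3 : 1 - b^2 * l^2 ≠ 0 := by nlinarith
  field_simp
  ring

end laplace

lemma int_exp_eta {Ω : Type*} [MeasurableSpace Ω] {P : Measure Ω} {b : ℝ} (hb : 0 < b)
    {X : Ω → ℝ} (hX : Measurable X) (hlaw : P.map X = laplaceMeasure b)
    {l : ℝ} (hl : |l| < 1/b) : Integrable (fun ω => Real.exp (l * X ω)) P := by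
  have h := laplace_exp_integrable hb hl
  rw [← hlaw] at h
  exact (integrable_map_measure
    (Measurable.aestronglyMeasurable (by fun_prop)) hX.aemeasurable).1 h

lemma mgf_eta {Ω : Type*} [MeasurableSpace Ω] {P : Measure Ω} {b : ℝ} (hb : 0 < b)
    {X : Ω → ℝ} (hX : Measurable X) (hlaw : P.map X = laplaceMeasure b)
    {l : ℝ} (hl : |l| < 1/b) : mgf X P l = (1 - l^2*b^2)⁻¹ := by
  have := laplace_exp_integral hb hl
  rw [← hlaw, integral_map hX.aemeasurable
    (Measurable.aestronglyMeasurable (by fun_prop))] at this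
  exact this

lemma sum_tail_bound {Ω : Type*} [MeasurableSpace Ω] (P : Measure Ω) [IsProbabilityMeasure P]
    {J : Type*} {b : ℝ} (hb : 0 < b)
    (η : J → Ω → ℝ) (hmeas : ∀ j, Measurable (η j))
    (hindep : iIndepFun η P)
    (hlaw : ∀ j, P.map (η j) = laplaceMeasure b)
    (s : Finset J) {T : ℕ} (hcard : s.card ≤ T)
    {l : ℝ} (hl0 : 0 ≤ l) (hl : |l| < 1/b) (hc : l^2*b^2 ≤ 1/2)
    {t₀ D : ℝ} (hkey : 2*(l^2*b^2)*(T:ℝ) - l*t₀ ≤ Real.log D) (hD : 0 < D) :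
    P {ω | t₀ < |∑ j ∈ s, η j ω|} ≤ ENNReal.ofReal (2*D) := by
  set S : Ω → ℝ := ∑ j ∈ s, η j with hSdef
  have hS : ∀ ω, S ω = ∑ j ∈ s, η j ω := by
    intro ω; simp [hSdef]
  have hc' : (0:ℝ) ≤ l^2*b^2 := by positivity
  have h1c : (0:ℝ) < 1 - l^2*b^2 := by linarith
  have hmgf_bound : ∀ t : ℝ, |t| < 1/b → t^2 = l^2 →
      mgf S P t ≤ exp (2*(l^2*b^2)*(T:ℝ)) := by
    intro t ht htl
    have h1 : mgf S P t = ((1 - l^2*b^2)⁻¹)^s.card := by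
      rw [hSdef, hindep.mgf_sum hmeas s,
        Finset.prod_congr rfl (fun j _ => mgf_eta hb (hmeas j) (hlaw j) ht),
        Finset.prod_const, htl]
    rw [h1]
    have hinv : (1 - l^2*b^2)⁻¹ ≤ exp (2*(l^2*b^2)) := by
      have h2 : (1 - l^2*b^2)⁻¹ ≤ 1 + 2*(l^2*b^2) := by
        rw [inv_eq_one_div, div_le_iff₀ h1c]; nlinarith
      exact h2.trans (by have := Real.add_one_le_exp (2*(l^2*b^2)); linarith)
    calc ((1 - l^2*b^2)⁻¹)^s.card ≤ (exp (2*(l^2*b^2)))^s.card :=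
          pow_le_pow_left₀ (by positivity) hinv _
      _ = exp (2*(l^2*b^2)*s.card) := by rw [← Real.exp_nat_mul]; ring_nf
      _ ≤ exp (2*(l^2*b^2)*(T:ℝ)) := by
          apply Real.exp_le_exp.2
          have hsc : (s.card:ℝ) ≤ (T:ℝ) := Nat.cast_le.2 hcard
          nlinarith
  have hexp_le : exp (-l*t₀) * exp (2*(l^2*b^2)*(T:ℝ)) ≤ D := by
    rw [← Real.exp_add]
    calc exp (-l*t₀ + 2*(l^2*b^2)*(T:ℝ)) ≤ exp (Real.log D) := by
          apply Real.exp_le_exp.2; linarith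
      _ = D := Real.exp_log hD
  have hup : (P {ω | t₀ ≤ S ω}).toReal ≤ D := by
    have hint : Integrable (fun ω => exp (l * S ω)) P := by
      rw [hSdef]
      exact hindep.integrable_exp_mul_sum hmeas
        (fun j _ => int_exp_eta hb (hmeas j) (hlaw j) hl)
    refine (measure_ge_le_exp_mul_mgf t₀ hl0 hint).trans ?_
    refine le_trans ?_ hexp_le
    exact mul_le_mul_of_nonneg_left (hmgf_bound l hl rfl) (Real.exp_pos _).le
  have hlo : (P {ω | S ω ≤ -t₀}).toReal ≤ D := by
    have hl' : |(-l)| < 1/b := by rwa [abs_neg]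
    have hint : Integrable (fun ω => exp ((-l) * S ω)) P := by
      rw [hSdef]
      exact hindep.integrable_exp_mul_sum hmeas
        (fun j _ => int_exp_eta hb (hmeas j) (hlaw j) hl')
    have h := measure_le_le_exp_mul_mgf (-t₀) (neg_nonpos.2 hl0) hint
    refine h.trans ?_
    refine le_trans ?_ hexp_le
    have : -(-l) * -t₀ = -l * t₀ := by ring
    rw [this]
    exact mul_le_mul_of_nonneg_left (hmgf_bound (-l) hl' (by ring)) (Real.exp_pos _).le
  have hsub : {ω | t₀ < |S ω|} ⊆ {ω | t₀ ≤ S ω} ∪ {ω | S ω ≤ -t₀} := by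
    intro ω hω
    rw [Set.mem_setOf_eq] at hω
    rcases lt_abs.1 hω with h | h
    · exact Or.inl h.le
    · exact Or.inr (show S ω ≤ -t₀ by linarith)
  have h1 : P {ω | t₀ ≤ S ω} ≤ ENNReal.ofReal D :=
    (ENNReal.le_ofReal_iff_toReal_le (measure_ne_top P _) hD.le).2 hup
  have h2 : P {ω | S ω ≤ -t₀} ≤ ENNReal.ofReal D :=
    (ENNReal.le_ofReal_iff_toReal_le (measure_ne_top P _) hD.le).2 hlo
  calc P {ω | t₀ < |∑ j ∈ s, η j ω|} = P {ω | t₀ < |S ω|} := by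
        congr 1; ext ω; rw [Set.mem_setOf_eq, Set.mem_setOf_eq, hS]
    _ ≤ P ({ω | t₀ ≤ S ω} ∪ {ω | S ω ≤ -t₀}) := measure_mono hsub
    _ ≤ P {ω | t₀ ≤ S ω} + P {ω | S ω ≤ -t₀} := measure_union_le _ _
    _ ≤ ENNReal.ofReal D + ENNReal.ofReal D := add_le_add h1 h2
    _ = ENNReal.ofReal (2*D) := by rw [← ENNReal.ofReal_add hD.le hD.le]; ring_nf

set_option maxHeartbeats 1000000 in
theorem stmt_10 {Ω : Type*} [MeasurableSpace Ω] (P : Measure Ω) [IsProbabilityMeasure P]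
    (m T : ℕ) (hm : 1 ≤ m) (hT : 1 ≤ T)
    (ε β : ℝ) (hε : 0 < ε) (hβ : β ∈ Set.Ioo (0 : ℝ) 1)
    {J : Type*} [Fintype J]
    (η : J → Ω → ℝ) (hmeas : ∀ j, Measurable (η j))
    (hindep : iIndepFun η P)
    (hlaw : ∀ j, P.map (η j) = laplaceMeasure (T / ε))
    (Js : Fin m → Finset J) (hJs : ∀ i, (Js i).card ≤ T)
    (N : Fin m → Ω → ℝ) (hN : ∀ i ω, N i ω = ∑ j ∈ Js i, η j ω) :
    P {ω | ∃ i : Fin m,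
        (T / ε) * Real.sqrt (8 * Real.log (2 * m / β)) *
            (Real.sqrt T + Real.sqrt (Real.log (2 * m / β)))
          < |N i ω|}
      ≤ ENNReal.ofReal β := by
  obtain ⟨hβ0, hβ1⟩ := hβ
  set b : ℝ := (T:ℝ) / ε with hbdef
  have hTpos : (0:ℝ) < T := by exact_mod_cast hT
  have hmpos : (0:ℝ) < m := by exact_mod_cast hm
  have hb : 0 < b := div_pos hTpos hε
  set L : ℝ := Real.log (2 * m / β) with hLdef
  have hm1 : (1:ℝ) ≤ m := by exact_mod_cast hm
  have hfrac : (1:ℝ) < 2 * m / β := by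
    rw [lt_div_iff₀ hβ0]
    nlinarith
  have hL : 0 < L := Real.log_pos hfrac
  set M : ℝ := max (T:ℝ) L with hMdef
  have hM : 0 < M := lt_max_of_lt_left hTpos
  set sM : ℝ := Real.sqrt M with hsMdef
  set sL : ℝ := Real.sqrt L with hsLdef
  set sT : ℝ := Real.sqrt (T:ℝ) with hsTdef
  have hsM : 0 < sM := Real.sqrt_pos.2 hM
  have hsL : 0 < sL := Real.sqrt_pos.2 hL
  have hsT : 0 < sT := Real.sqrt_pos.2 hTpos
  have hsM2 : sM^2 = M := Real.sq_sqrt hM.le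
  have hsL2 : sL^2 = L := Real.sq_sqrt hL.le
  have hsT2 : sT^2 = (T:ℝ) := Real.sq_sqrt hTpos.le
  set l : ℝ := Real.sqrt (L/(2*M)) / b with hldef
  have hl0 : 0 ≤ l := by positivity
  have hlb : l * b = Real.sqrt (L/(2*M)) := div_mul_cancel₀ _ hb.ne'
  have hLM : L ≤ M := le_max_right _ _
  have hhalf : L/(2*M) ≤ 1/2 := by
    rw [div_le_div_iff₀ (by positivity) (by norm_num)]
    linarith
  have hc2 : l^2*b^2 = L/(2*M) := by
    have : l^2*b^2 = (l*b)^2 := by ring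
    rw [this, hlb, Real.sq_sqrt (by positivity)]
  have hc : l^2*b^2 ≤ 1/2 := by rw [hc2]; exact hhalf
  have hl : |l| < 1/b := by
    rw [abs_of_nonneg hl0]
    have h1 : Real.sqrt (L/(2*M)) < 1 := by
      have := Real.sqrt_lt_sqrt (by positivity : (0:ℝ) ≤ L/(2*M)) (hhalf.trans_lt (by norm_num : (1:ℝ)/2 < 1))
      simpa using this
    rw [hldef]
    gcongr
  set t₀ : ℝ := b * Real.sqrt (8 * L) * (sT + sL) with ht₀def
  have hsqrt48 : Real.sqrt (L/(2*M)) * Real.sqrt (8*L) = 2*L/sM := by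
    rw [← Real.sqrt_mul (by positivity)]
    have : L/(2*M) * (8*L) = (2*L/sM)^2 := by
      rw [div_pow, hsM2]; field_simp; ring
    rw [this, Real.sqrt_sq (by positivity)]
  have hlt₀ : l * t₀ = (2*L/sM) * (sT + sL) := by
    have e : l * t₀ = l * b * Real.sqrt (8*L) * (sT + sL) := by rw [ht₀def]; ring
    rw [e, hlb, hsqrt48]
  have hkey : 2*(l^2*b^2)*(T:ℝ) - l*t₀ ≤ Real.log (β/(2*m)) := by
    have hlog : Real.log (β/(2*m)) = -L := by
      rw [hLdef, ← Real.log_inv]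
      congr 1
      field_simp
    rw [hlog, hc2, hlt₀]
    have key2 : (T:ℝ)*L + L*sM^2 ≤ 2*L*sM*sT + 2*L*sM*sL := by
      rcases le_total L (T:ℝ) with h | h
      · have hMT : M = (T:ℝ) := max_eq_left h
        have hsMT : sM = sT := by rw [hsMdef, hsTdef, hMT]
        rw [hsMT]
        nlinarith [mul_nonneg (mul_nonneg hL.le hsT.le) hsL.le]
      · have hML : M = L := max_eq_right h
        have hsML : sM = sL := by rw [hsMdef, hsLdef, hML]
        rw [hsML]
        nlinarith [mul_nonneg (mul_nonneg hL.le hsL.le) hsT.le,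
          mul_le_mul_of_nonneg_left h hL.le]
    have e1 : 2*(L/(2*M))*(T:ℝ) = (T:ℝ)*L/sM^2 := by
      rw [hsM2]; ring
    have e2 : (2*L/sM) * (sT + sL) = (2*L*sM*sT + 2*L*sM*sL)/sM^2 := by
      field_simp
    rw [e1, e2, div_sub_div_same, div_le_iff₀ (by positivity)]
    nlinarith [key2]
  have hD : (0:ℝ) < β/(2*m) := by positivity
  have hper : ∀ i : Fin m, P {ω | t₀ < |N i ω|} ≤ ENNReal.ofReal (2*(β/(2*m))) := by
    intro i
    have : {ω | t₀ < |N i ω|} = {ω | t₀ < |∑ j ∈ Js i, η j ω|} := by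
      ext ω; rw [Set.mem_setOf_eq, Set.mem_setOf_eq, hN i ω]
    rw [this]
    exact sum_tail_bound P hb η hmeas hindep hlaw (Js i) (hJs i) hl0 hl hc hkey hD
  have hset : {ω | ∃ i : Fin m, t₀ < |N i ω|} = ⋃ i, {ω | t₀ < |N i ω|} :=
    Set.setOf_exists _
  have heq2 : 2*(β/(2*m)) = β/m := by field_simp
  calc P {ω | ∃ i : Fin m, t₀ < |N i ω|}
      ≤ ∑' i : Fin m, P {ω | t₀ < |N i ω|} := by rw [hset]; exact measure_iUnion_le _
    _ ≤ ∑' i : Fin m, ENNReal.ofReal (β/m) := by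
        refine ENNReal.tsum_le_tsum (fun i => ?_)
        rw [← heq2]; exact hper i
    _ = (m : ENNReal) * ENNReal.ofReal (β/m) := by
        rw [tsum_fintype]
        simp [Finset.card_univ]
    _ = ENNReal.ofReal β := by
        rw [← ENNReal.ofReal_natCast m, ← ENNReal.ofReal_mul (by positivity)]
        congr 1
        field_simp
end
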